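/- arXiv:2205.12139 — 4 statements merged into one kernel-verified Lean document; each statement's English description precedes it below -/
import Mathlib

section
/- Let f be a non-decreasing UPP function with parameters (T_f, d_f, c_f) where c_f > 0 (f is not ultimately constant) and f is finite everywhere. Then the lower pseudo-inverse f↓(y) = inf{x | f(x) ≥ y} is again UPP with transient start f(T_f + d_f), period c_f, and height d_f; that is, for all y ≥ f(T_f + d_f) and all k ∈ ℕ, f↓(y + k·c_f) = f↓(y) + k·d_f. -/
/-!
Once `y > f T`, every `q ≥ 0` with `y ≤ f q` lies beyond `T`, where `f` is periodic; so translating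
by `k * d` maps `{q ≥ 0 | y ≤ f q}` bijectively onto `{q ≥ 0 | y + k * c ≤ f q}`, and the infimum
moves by `k * d`. The threshold `f (T + d) = f T + c` guarantees `y > f T`.
-/

/-- Lower pseudo-inverse of f : ℚ≥0 → ℚ, as a real number:
f↓(y) = inf { x ≥ 0 | f(x) ≥ y }. -/
noncomputable def lpiQ (f : ℚ → ℚ) (y : ℚ) : ℝ :=
  sInf {x : ℝ | ∃ q : ℚ, x = (q : ℝ) ∧ 0 ≤ q ∧ y ≤ f q}

open Set

theorem superlevel_subset_Ioi {α β : Type*} [LinearOrder α] [Zero α] [Preorder β] {f : α → β}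
    (hmono : MonotoneOn f (Ici 0)) {t : α} {y : β} (ht : 0 ≤ t) (hy : f t < y) :
    {q | 0 ≤ q ∧ y ≤ f q} ⊆ Ioi t :=
  fun _ ⟨hq, hyq⟩ => hmono.reflect_lt ht hq (hy.trans_le hyq)

section Periodic

variable {α : Type*} [CommRing α] [LinearOrder α] [IsStrictOrderedRing α]
  {f : α → α} {T d c : α}

theorem image_add_superlevel (hT : 0 ≤ T) (hd : 0 ≤ d) (hmono : MonotoneOn f (Ici 0))
    (hupp : ∀ t, T ≤ t → ∀ k : ℕ, f (t + k * d) = f t + k * c) {y : α} (hy : f T < y)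
    (k : ℕ) : (· + k * d) '' {q | 0 ≤ q ∧ y ≤ f q} = {q | 0 ≤ q ∧ y + k * c ≤ f q} := by
  have hkd : 0 ≤ (k : α) * d := by positivity
  ext q
  constructor
  · rintro ⟨p, hp, rfl⟩
    dsimp only
    have hTp : T < p := superlevel_subset_Ioi hmono hT hy hp
    refine ⟨by linarith [hp.1], ?_⟩
    rw [hupp p hTp.le k]
    linarith [hp.2]
  · intro hq
    have hykc : f (T + k * d) < y + k * c := by rw [hupp T le_rfl k]; linarith
    have hTq : T + k * d < q := superlevel_subset_Ioi hmono (by positivity) hykc hq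
    have hshift : f q = f (q - k * d) + k * c := by
      rw [← hupp _ (by linarith) k, sub_add_cancel]
    exact ⟨q - k * d, ⟨by linarith, by linarith [hq.2]⟩, sub_add_cancel q _⟩

theorem superlevel_nonempty [Archimedean α] (hd : 0 ≤ d) (hc : 0 < c)
    (hupp : ∀ t, T ≤ t → ∀ k : ℕ, f (t + k * d) = f t + k * c) {t : α} (hTt : T ≤ t)
    (ht : 0 ≤ t) (y : α) : {q | 0 ≤ q ∧ y ≤ f q}.Nonempty := by
  obtain ⟨k, hk⟩ := Archimedean.arch (y - f t) hc
  refine ⟨t + k * d, by positivity, ?_⟩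
  rw [hupp t hTt k]
  linarith [nsmul_eq_mul k c ▸ hk]

end Periodic

theorem csInf_image_add_const {M : Type*} [ConditionallyCompleteLattice M] [AddGroup M]
    [AddLeftMono M] [AddRightMono M] {s : Set M} (hs : s.Nonempty) (hbdd : BddBelow s)
    (a : M) : sInf ((· + a) '' s) = sInf s + a := by
  rw [← add_singleton, csInf_add hs hbdd (singleton_nonempty a) bddBelow_singleton,
    csInf_singleton]

theorem lpiQ_eq_sInf_image (f : ℚ → ℚ) (y : ℚ) :
    lpiQ f y = sInf (((↑) : ℚ → ℝ) '' {q | 0 ≤ q ∧ y ≤ f q}) := by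
  unfold lpiQ
  congr 1
  ext x
  exact ⟨fun ⟨q, hx, hq⟩ => ⟨q, hq, hx.symm⟩, fun ⟨q, hq, hx⟩ => ⟨q, hx.symm, hq⟩⟩

/-- the lower pseudo-inverse of a non-decreasing, everywhere finite,
non-UC UPP function f with parameters (T, d, c), c > 0, is UPP with transient
start f(T + d), period c and height d. -/
theorem lpi_upp (f : ℚ → ℚ) (T d c : ℚ) (hT : 0 ≤ T) (hd : 0 < d) (hc : 0 < c)
    (hmono : ∀ x y : ℚ, 0 ≤ x → x ≤ y → f x ≤ f y)
    (hupp : ∀ t : ℚ, T ≤ t → ∀ k : ℕ, f (t + (k : ℚ) * d) = f t + (k : ℚ) * c) :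
    ∀ y : ℚ, f (T + d) ≤ y → ∀ k : ℕ,
      lpiQ f (y + (k : ℚ) * c) = lpiQ f y + (k : ℝ) * (d : ℝ) := by
  intro y hy k
  have hmono' : MonotoneOn f (Ici 0) := fun x hx _ _ hxy => hmono x _ hx hxy
  have hTy : f T < y := by
    have h := hupp T le_rfl 1
    rw [Nat.cast_one, one_mul, one_mul] at h
    linarith
  have hne := (superlevel_nonempty hd.le hc hupp le_rfl hT y).image ((↑) : ℚ → ℝ)
  have hbdd : BddBelow (((↑) : ℚ → ℝ) '' {q | 0 ≤ q ∧ y ≤ f q}) :=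
    ⟨0, by rintro _ ⟨q, hq, rfl⟩; exact_mod_cast hq.1⟩
  rw [lpiQ_eq_sInf_image, lpiQ_eq_sInf_image, ← image_add_superlevel hT hd.le hmono' hupp hTy,
    image_comm (g' := (· + (k : ℝ) * d)) (fun q => by push_cast; rfl),
    csInf_image_add_const hne hbdd]
end

section
/- Let f be a non-decreasing UPP function with parameters (T_f, d_f, c_f) where c_f > 0 (f is not ultimately constant) and f is finite everywhere. Then the upper pseudo-inverse f↑(y) = sup{x | f(x) ≤ y} is again UPP with transient start f(T_f), period c_f, and height d_f; that is, for all y ≥ f(T_f) and all k ∈ ℕ, f↑(y + k·c_f) = f↑(y) + k·d_f. -/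
/-- Upper pseudo-inverse of f : ℚ≥0 → ℚ, as a real number:
f↑(y) = sup { x ≥ 0 | f(x) ≤ y }. -/
noncomputable def upiQ (f : ℚ → ℚ) (y : ℚ) : ℝ :=
  sSup {x : ℝ | ∃ q : ℚ, x = (q : ℝ) ∧ 0 ≤ q ∧ f q ≤ y}

/-!
Past the transient, the sublevel set `{x | f x ≤ y + c}` is the sublevel set `{x | f x ≤ y}`
shifted right by `d`, up to points below `T + d`; since `T` already lies in `{x | f x ≤ y}`
when `f T ≤ y`, those points do not affect the supremum, so `f↑ (y + c) = f↑ y + d`.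
Boundedness of the sublevel sets, needed for the suprema to be meaningful, comes from `c > 0`
and monotonicity.
-/

section UpperPseudoInverse

variable {f : ℚ → ℚ} {y : ℚ}

lemma le_upiQ {q B : ℚ} (hB : ∀ p, 0 ≤ p → f p ≤ y → p ≤ B) (hq : 0 ≤ q) (hfq : f q ≤ y) :
    (q : ℝ) ≤ upiQ f y := by
  refine le_csSup ⟨B, ?_⟩ ⟨q, rfl, hq, hfq⟩
  rintro x ⟨p, rfl, hp, hfp⟩
  exact_mod_cast hB p hp hfp

lemma upiQ_le {q : ℚ} {b : ℝ} (hq : 0 ≤ q) (hfq : f q ≤ y)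
    (h : ∀ p, 0 ≤ p → f p ≤ y → (p : ℝ) ≤ b) : upiQ f y ≤ b := by
  refine csSup_le ⟨q, q, rfl, hq, hfq⟩ ?_
  rintro x ⟨p, rfl, hp, hfp⟩
  exact h p hp hfp

end UpperPseudoInverse

lemma exists_sublevel_bound_of_upp {f : ℚ → ℚ} {T d c : ℚ} (hT : 0 ≤ T) (hd : 0 ≤ d)
    (hc : 0 < c) (hmono : ∀ x y : ℚ, 0 ≤ x → x ≤ y → f x ≤ f y)
    (hupp : ∀ t : ℚ, T ≤ t → ∀ k : ℕ, f (t + (k : ℚ) * d) = f t + (k : ℚ) * c) (y : ℚ) :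
    ∃ B : ℚ, ∀ p, 0 ≤ p → f p ≤ y → p ≤ B := by
  obtain ⟨k, hk⟩ := exists_nat_gt ((y - f T) / c)
  have hy : y < f (T + k * d) := by
    rw [hupp T le_rfl k]
    linarith [(div_lt_iff₀ hc).mp hk]
  refine ⟨T + k * d, fun p hp hfp => ?_⟩
  by_contra! hlt
  linarith [hmono _ _ (by positivity) hlt.le]

lemma upiQ_add_of_periodic {f : ℚ → ℚ} {T d c : ℚ} (hT : 0 ≤ T) (hd : 0 ≤ d)
    (hper : ∀ t : ℚ, T ≤ t → f (t + d) = f t + c)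
    (hbdd : ∀ y : ℚ, ∃ B : ℚ, ∀ p, 0 ≤ p → f p ≤ y → p ≤ B) {y : ℚ} (hy : f T ≤ y) :
    upiQ f (y + c) = upiQ f y + d := by
  obtain ⟨B, hB⟩ := hbdd y
  obtain ⟨B', hB'⟩ := hbdd (y + c)
  have hTd : f (T + d) ≤ y + c := by rw [hper T le_rfl]; linarith
  have hT_le : (T : ℝ) ≤ upiQ f y := le_upiQ hB hT hy
  apply le_antisymm
  · refine upiQ_le (by linarith) hTd fun p hp hfp => ?_
    rcases le_or_gt (T + d) p with h | h
    · have hfp' : f (p - d) ≤ y := by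
        have := hper (p - d) (by linarith)
        rw [sub_add_cancel] at this
        linarith
      have := le_upiQ hB (by linarith) hfp'
      push_cast at this
      linarith
    · have : (p : ℝ) < T + d := by exact_mod_cast h
      linarith
  · rw [← le_sub_iff_add_le]
    refine upiQ_le hT hy fun p hp hfp => ?_
    rw [le_sub_iff_add_le]
    rcases le_or_gt T p with h | h
    · have hfp' : f (p + d) ≤ y + c := by rw [hper p h]; linarith
      exact_mod_cast le_upiQ hB' (by linarith) hfp'
    · have := le_upiQ hB' (by linarith) hTd
      have : (p : ℝ) ≤ T := by exact_mod_cast h.le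
      push_cast at *
      linarith

lemma apply_add_nat_mul_of_apply_add {g : ℚ → ℝ} {y₀ c : ℚ} {d : ℝ} (hc : 0 ≤ c)
    (hstep : ∀ y, y₀ ≤ y → g (y + c) = g y + d) {y : ℚ} (hy : y₀ ≤ y) (k : ℕ) :
    g (y + k * c) = g y + k * d := by
  induction k with
  | zero => simp
  | succ n ih =>
    have hyn : y₀ ≤ y + n * c := by nlinarith
    rw [Nat.cast_succ, add_one_mul, ← add_assoc, hstep _ hyn, ih]
    push_cast
    ring

/-- the upper pseudo-inverse of a non-decreasing, everywhere finite,
non-UC UPP function f with parameters (T, d, c), c > 0, is UPP with transient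
start f(T), period c and height d. -/
theorem upi_upp (f : ℚ → ℚ) (T d c : ℚ) (hT : 0 ≤ T) (hd : 0 < d) (hc : 0 < c)
    (hmono : ∀ x y : ℚ, 0 ≤ x → x ≤ y → f x ≤ f y)
    (hupp : ∀ t : ℚ, T ≤ t → ∀ k : ℕ, f (t + (k : ℚ) * d) = f t + (k : ℚ) * c) :
    ∀ y : ℚ, f T ≤ y → ∀ k : ℕ,
      upiQ f (y + (k : ℚ) * c) = upiQ f y + (k : ℝ) * (d : ℝ) := by
  have hper : ∀ t : ℚ, T ≤ t → f (t + d) = f t + c := by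
    simpa using fun t ht => hupp t ht 1
  have hbdd := exists_sublevel_bound_of_upp hT hd.le hc hmono hupp
  intro y hy k
  exact apply_add_nat_mul_of_apply_add (g := upiQ f) hc.le
    (fun y hy => upiQ_add_of_periodic hT hd.le hper hbdd hy) hy k
end

section
/- If f is non-decreasing and left-continuous, then the lower pseudo-inverse of its lower pseudo-inverse equals f, i.e., (f↓)↓ = f; likewise (f↑)↓ = f. -/
/-!
Both `(f↓)↓ x` and `(f↑)↓ x` are squeezed to `f x` by the same two bounds. From above, every
level `y > f x` has `x ≤ f↓ y` by monotonicity, and already `y = f x` has `x ≤ f↑ y`.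
From below, if `y < f x` then left-continuity gives some `t < x` with `y < f t`, which forces
`f↓ y ≤ t` and `f↑ y ≤ t`; hence `x ≤ f↓ y` or `x ≤ f↑ y` is impossible.
-/

open Filter Topology

/-- Lower pseudo-inverse of g : ℝ≥0 → EReal: g↓(y) = inf { x ≥ 0 | g(x) ≥ y }. -/
noncomputable def lpiE (g : ℝ → EReal) (y : ℝ) : EReal :=
  sInf ((fun x : ℝ => (x : EReal)) '' {x | 0 ≤ x ∧ (y : EReal) ≤ g x})

/-- Upper pseudo-inverse of g : ℝ≥0 → EReal: g↑(y) = sup { x ≥ 0 | g(x) ≤ y }. -/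
noncomputable def upiE (g : ℝ → EReal) (y : ℝ) : EReal :=
  sSup ((fun x : ℝ => (x : EReal)) '' {x | 0 ≤ x ∧ g x ≤ (y : EReal)})

lemma exists_mem_Ico_lt_of_continuousWithinAt {f : ℝ → ℝ} {x y : ℝ} (hx : 0 < x)
    (hf : ContinuousWithinAt f (Set.Icc 0 x) x) (hy : y < f x) :
    ∃ t ∈ Set.Ico 0 x, y < f t := by
  have : (𝓝[Set.Ico 0 x] x).NeBot := by
    rw [← mem_closure_iff_nhdsWithin_neBot, closure_Ico hx.ne]
    exact Set.right_mem_Icc.mpr hx.le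
  have hev : ∀ᶠ t in 𝓝[Set.Ico 0 x] x, y < f t :=
    (hf.mono Set.Ico_subset_Icc_self).eventually (eventually_gt_nhds hy)
  obtain ⟨t, hyt, ht⟩ := (hev.and eventually_mem_nhdsWithin).exists
  exact ⟨t, ht, hyt⟩

section PseudoInverse

variable {g : ℝ → EReal}

lemma lpiE_le {y t : ℝ} (ht : 0 ≤ t) (hy : (y : EReal) ≤ g t) : lpiE g y ≤ t :=
  sInf_le ⟨t, ⟨ht, hy⟩, rfl⟩

lemma le_lpiE (hg : MonotoneOn g (Set.Ici 0)) {x y : ℝ} (hx : 0 ≤ x) (hxy : g x < y) :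
    (x : EReal) ≤ lpiE g y := by
  refine le_sInf ?_
  rintro _ ⟨t, ⟨ht, hyt⟩, rfl⟩
  by_contra! htx
  exact (hxy.trans_le hyt).not_ge (hg ht hx (EReal.coe_lt_coe_iff.mp htx).le)

lemma le_upiE {y t : ℝ} (ht : 0 ≤ t) (hy : g t ≤ y) : (t : EReal) ≤ upiE g y :=
  le_sSup ⟨t, ⟨ht, hy⟩, rfl⟩

lemma upiE_le (hg : MonotoneOn g (Set.Ici 0)) {y t : ℝ} (ht : 0 ≤ t) (hy : (y : EReal) < g t) :
    upiE g y ≤ t := by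
  refine sSup_le ?_
  rintro _ ⟨s, ⟨hs, hsy⟩, rfl⟩
  by_contra! hts
  exact (hsy.trans_lt hy).not_ge (hg ht hs (EReal.coe_lt_coe_iff.mp hts).le)

end PseudoInverse

lemma le_lpiE_of_continuousWithinAt {f : ℝ → ℝ} {G : ℝ → EReal} {x : ℝ} (hx : 0 ≤ x)
    (hf0 : f 0 = 0) (hlc : ContinuousWithinAt f (Set.Icc 0 x) x)
    (hG : ∀ y t : ℝ, 0 ≤ t → y < f t → G y ≤ t) :
    (f x : EReal) ≤ lpiE G x := by
  refine le_sInf ?_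
  rintro _ ⟨y, ⟨hy, hxG⟩, rfl⟩
  rw [EReal.coe_le_coe_iff]
  by_contra! hyx
  have hx0 : 0 < x := hx.lt_of_ne <| by
    rintro rfl
    exact hy.not_gt (hf0 ▸ hyx)
  obtain ⟨t, ⟨ht, htx⟩, hyt⟩ := exists_mem_Ico_lt_of_continuousWithinAt hx0 hlc hyx
  exact htx.not_ge (EReal.coe_le_coe_iff.mp (hxG.trans (hG y t ht hyt)))

theorem lpi_lpi_eq_general (f : ℝ → ℝ) (hmono : MonotoneOn f (Set.Ici 0))
    (hf0 : f 0 = 0)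
    (hlc : ∀ x : ℝ, 0 ≤ x → ContinuousWithinAt f (Set.Icc 0 x) x) :
    (∀ x : ℝ, 0 ≤ x → lpiE (lpiE (fun t => (f t : EReal))) x = (f x : EReal)) ∧
    (∀ x : ℝ, 0 ≤ x → lpiE (upiE (fun t => (f t : EReal))) x = (f x : EReal)) := by
  have hmonoE : MonotoneOn (fun t => (f t : EReal)) (Set.Ici 0) :=
    EReal.coe_strictMono.monotone.comp_monotoneOn hmono
  have hnonneg : ∀ x : ℝ, 0 ≤ x → 0 ≤ f x := fun x hx => hf0 ▸ hmono (Set.mem_Ici.mpr le_rfl) hx hx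
  refine ⟨fun x hx => le_antisymm ?_ ?_, fun x hx => le_antisymm ?_ ?_⟩
  · refine EReal.le_of_forall_lt_iff_le.mp fun y hy => ?_
    have hy : f x < y := EReal.coe_lt_coe_iff.mp hy
    exact lpiE_le ((hnonneg x hx).trans hy.le) (le_lpiE hmonoE hx (EReal.coe_lt_coe_iff.mpr hy))
  · exact le_lpiE_of_continuousWithinAt hx hf0 (hlc x hx) fun y t ht hyt =>
      lpiE_le ht (EReal.coe_le_coe_iff.mpr hyt.le)
  · exact lpiE_le (hnonneg x hx) (le_upiE hx le_rfl)
  · exact le_lpiE_of_continuousWithinAt hx hf0 (hlc x hx) fun y t ht hyt =>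
      upiE_le hmonoE ht (EReal.coe_lt_coe_iff.mpr hyt)

/-- if f : ℝ≥0 → ℝ≥0 is non-decreasing, left-continuous and f(0) = 0,
then (f↓)↓ = f and (f↑)↓ = f. -/
theorem lpi_lpi_eq (f : ℝ → ℝ) (hmono : MonotoneOn f (Set.Ici 0))
    (hnonneg : ∀ x : ℝ, 0 ≤ x → 0 ≤ f x) (hf0 : f 0 = 0)
    (hlc : ∀ x : ℝ, 0 ≤ x → ContinuousWithinAt f (Set.Icc 0 x) x) :
    (∀ x : ℝ, 0 ≤ x → lpiE (lpiE (fun t => (f t : EReal))) x = (f x : EReal)) ∧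
    (∀ x : ℝ, 0 ≤ x → lpiE (upiE (fun t => (f t : EReal))) x = (f x : EReal)) :=
  lpi_lpi_eq_general f hmono hf0 hlc
end

section
/- Let f be non-decreasing on an interval, constant equal to b₁ on ]t₁, t₂[ with a jump at t₂: f(t₂) = b₃ > b₁. Then for every y with b₁ < y ≤ b₃, the lower pseudo-inverse satisfies f↓(y) = t₂. -/
theorem isLeast_setOf_le_of_forall_lt {α β : Type*} [LinearOrder α] [Preorder β] {f : α → β}
    {t : α} {y : β} (hlt : ∀ x < t, f x < y) (hle : y ≤ f t) : IsLeast {x | y ≤ f x} t :=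
  ⟨hle, fun x hx => not_lt.1 fun hxt => (hlt x hxt).not_ge hx⟩

theorem Monotone.le_of_eqOn_Ioo {α β : Type*} [LinearOrder α] [DenselyOrdered α] [Preorder β]
    {f : α → β} (hf : Monotone f) {t₁ t₂ : α} {b : β} (h12 : t₁ < t₂)
    (hconst : ∀ x ∈ Set.Ioo t₁ t₂, f x = b) {x : α} (hx : x < t₂) : f x ≤ b := by
  obtain ⟨z, hz, hz₂⟩ := exists_between (max_lt hx h12)
  obtain ⟨hxz, hz₁⟩ := max_lt_iff.1 hz
  calc f x ≤ f z := hf hxz.le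
    _ = b := hconst z ⟨hz₁, hz₂⟩

theorem lpi_const_then_jump_general (f : ℝ → ℝ) (t₁ t₂ b₁ b₃ : ℝ) (h12 : t₁ < t₂)
    (hf : Monotone f)
    (hconst : ∀ x : ℝ, x ∈ Set.Ioo t₁ t₂ → f x = b₁)
    (hjump : f t₂ = b₃) :
    ∀ y : ℝ, b₁ < y → y ≤ b₃ → sInf {x : ℝ | y ≤ f x} = t₂ := by
  intro y hy₁ hy₃
  have hlt : ∀ x < t₂, f x < y := fun x hx => (hf.le_of_eqOn_Ioo h12 hconst hx).trans_lt hy₁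
  exact (isLeast_setOf_le_of_forall_lt hlt (hjump ▸ hy₃)).csInf_eq

/-- case c1: if f is non-decreasing, constant equal to b₁ on
]t₁, t₂[ and f(t₂) = b₃ > b₁, then for every y with b₁ < y ≤ b₃ the lower
pseudo-inverse f↓(y) = inf { x | f(x) ≥ y } equals t₂. -/
theorem lpi_const_then_jump (f : ℝ → ℝ) (t₁ t₂ b₁ b₃ : ℝ) (h12 : t₁ < t₂)
    (hf : Monotone f)
    (hconst : ∀ x : ℝ, x ∈ Set.Ioo t₁ t₂ → f x = b₁)
    (hjump : f t₂ = b₃) (hb : b₁ < b₃) :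
    ∀ y : ℝ, b₁ < y → y ≤ b₃ → sInf {x : ℝ | y ≤ f x} = t₂ :=
  lpi_const_then_jump_general f t₁ t₂ b₁ b₃ h12 hf hconst hjump
end
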